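/- arXiv:1810.01038 — 2 statements merged into one kernel-verified Lean document; each statement's English description precedes it below -/
import Mathlib

section
/- Let q be a prime number, let l ≥ 2 be an integer, and let α be a rational number with α ≠ 0, α ≠ qˡ, whose numerator is divisible by q; write α.num = q·α₁′ and α₂ = α.den. Then α ∈ ℚ-KS(qˡ) if and only if the integer α₂ − α₁′ divides q^{l−1} − 1. -/
/-!
Write `α.num = q a` and `d = α.den`. For a prime power the Korselt condition is the single
divisibility `q (d - a) ∣ q (d q^(l-1) - a)`, i.e. `d - a ∣ d q^(l-1) - a`. Since
`d q^(l-1) - a = d (q^(l-1) - 1) + (d - a)` and `d - a` is coprime to `d` (because `a` is),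
this is equivalent to `d - a ∣ q^(l-1) - 1`.
-/

/-- `α` is an `N`-Korselt base: `α ≠ 0`, `α ≠ N`, and for every prime `p` dividing `N`,
`α.den * p - α.num` divides `α.den * N - α.num`. -/
def QKS (N : ℕ) (α : ℚ) : Prop :=
  α ≠ 0 ∧ α ≠ (N : ℚ) ∧
    ∀ p : ℕ, p.Prime → p ∣ N →
      ((α.den : ℤ) * p - α.num) ∣ ((α.den : ℤ) * N - α.num)

theorem qks_prime_pow_iff {q : ℕ} (hq : q.Prime) {l : ℕ} (hl : l ≠ 0) (α : ℚ) :
    QKS (q ^ l) α ↔ α ≠ 0 ∧ α ≠ (q : ℚ) ^ l ∧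
      ((α.den : ℤ) * q - α.num) ∣ ((α.den : ℤ) * q ^ l - α.num) := by
  simp only [QKS, Nat.cast_pow]
  refine and_congr_right' (and_congr_right' ⟨fun h => h q hq (dvd_pow_self q hl), ?_⟩)
  intro h p hp hpq
  rwa [Nat.prime_eq_prime_of_dvd_pow hp hq hpq]

theorem sub_dvd_mul_sub_iff_of_isCoprime {R : Type*} [CommRing R] {a d : R} (m : R)
    (had : IsCoprime a d) : d - a ∣ d * m - a ↔ d - a ∣ m - 1 := by
  have hcop : IsCoprime (d - a) d := by
    simpa [sub_eq_neg_add] using had.neg_left.add_mul_left_left 1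
  rw [show d * m - a = d * (m - 1) + (d - a) by ring, dvd_add_left dvd_rfl]
  exact ⟨hcop.dvd_of_dvd_mul_left, (Dvd.dvd.mul_left · d)⟩

theorem stmt_1 (q : ℕ) (hq : q.Prime) (l : ℕ) (hl : 2 ≤ l) (α : ℚ) (hα0 : α ≠ 0)
    (hαN : α ≠ (q : ℚ) ^ l) (hdvd : (q : ℤ) ∣ α.num) :
    QKS (q ^ l) α ↔ ((α.den : ℤ) - α.num / (q : ℤ)) ∣ ((q : ℤ) ^ (l - 1) - 1) := by
  obtain ⟨a, ha⟩ := hdvd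
  have hq0 : (q : ℤ) ≠ 0 := mod_cast hq.ne_zero
  have had : IsCoprime a α.den :=
    (Rat.isCoprime_num_den α).of_isCoprime_of_dvd_left ⟨q, by rw [ha, mul_comm]⟩
  have hbase : (α.den : ℤ) * q - α.num = q * (α.den - a) := by rw [ha]; ring
  have hpow : (α.den : ℤ) * q ^ l - α.num = q * (α.den * q ^ (l - 1) - a) := by
    rw [ha]
    nth_rewrite 1 [show l = l - 1 + 1 by omega]
    ring
  rw [qks_prime_pow_iff hq (by omega), hbase, hpow, ha, Int.mul_ediv_cancel_left a hq0,
    mul_dvd_mul_iff_left hq0, sub_dvd_mul_sub_iff_of_isCoprime _ had]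
  simp only [hα0, hαN, ne_eq, not_false_eq_true, true_and]
end

section
/- Let q be a prime number, l ≥ 2 an integer, and α ∈ ℚ-KS(qˡ); write α₂ = α.den. Then 0 < α < 1 if and only if there exists a positive integer d dividing qˡ − q such that α = q − d/α₂ and ⌊d/q⌋ + 1 ≤ α₂ ≤ ⌈d/(q−1)⌉ − 1 (here ⌊·⌋ and ⌈·⌉ denote floor and ceiling of the rational quotients). -/
theorem Rat.isCoprime_den_mul_sub_num (α : ℚ) (n : ℤ) :
    IsCoprime ((α.den : ℤ) * n - α.num) α.den := by
  have hred : IsCoprime α.num α.den := Int.isCoprime_iff_gcd_eq_one.mpr α.reduced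
  have h := hred.neg_left.add_mul_left_left n
  rwa [neg_add_eq_sub] at h

theorem QKS.den_mul_sub_num_dvd_sub {N : ℕ} {α : ℚ} (h : QKS N α) {p : ℕ} (hp : p.Prime)
    (hpN : p ∣ N) :
    ((α.den : ℤ) * p - α.num) ∣ ((N : ℤ) - p) := by
  have hden : ((α.den : ℤ) * p - α.num) ∣ (α.den : ℤ) * ((N : ℤ) - p) := by
    rw [show (α.den : ℤ) * ((N : ℤ) - p) = (α.den * N - α.num) - (α.den * p - α.num) by ring]
    exact dvd_sub (h.2.2 p hp hpN) dvd_rfl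
  exact (α.isCoprime_den_mul_sub_num p).dvd_of_dvd_mul_left hden

section Ordered

variable {K : Type*} [Field K] [LinearOrder K] [IsStrictOrderedRing K]

theorem sub_div_pos_and_lt_one_iff {q d m : K} (hm : 0 < m) :
    (0 < q - d / m ∧ q - d / m < 1) ↔ (m * (q - 1) < d ∧ d < m * q) := by
  rw [sub_pos, div_lt_iff₀ hm, sub_lt_iff_lt_add, ← sub_lt_iff_lt_add', lt_div_iff₀ hm]
  constructor <;> rintro ⟨h₁, h₂⟩ <;> constructor <;> linarith

theorem floor_div_add_one_le_and_le_ceil_div_sub_one_iff [FloorRing K] {q d : K} {m : ℤ}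
    (hq : 1 < q) :
    (⌊d / q⌋ + 1 ≤ m ∧ m ≤ ⌈d / (q - 1)⌉ - 1) ↔ (m * (q - 1) < d ∧ d < m * q) := by
  rw [Int.add_one_le_iff, Int.floor_lt, div_lt_iff₀ (by linarith), le_sub_iff_add_le,
    Int.add_one_le_iff, Int.lt_ceil, lt_div_iff₀ (sub_pos.mpr hq)]
  exact and_comm.trans (and_congr Iff.rfl (by rw [mul_comm]))

end Ordered

theorem stmt_18 (q : ℕ) (hq : q.Prime) (l : ℕ) (hl : 2 ≤ l) (α : ℚ)
    (hα : QKS (q ^ l) α) :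
    (0 < α ∧ α < 1) ↔
      ∃ d : ℤ, 0 < d ∧ d ∣ ((q : ℤ) ^ l - q) ∧
        α = (q : ℚ) - (d : ℚ) / (α.den : ℚ) ∧
        ⌊(d : ℚ) / (q : ℚ)⌋ + 1 ≤ (α.den : ℤ) ∧
        (α.den : ℤ) ≤ ⌈(d : ℚ) / ((q : ℚ) - 1)⌉ - 1 := by
  have hq1 : (1 : ℚ) < q := by exact_mod_cast hq.one_lt
  have hden : (0 : ℚ) < α.den := by exact_mod_cast α.pos
  constructor
  · intro hα01
    set d : ℤ := (α.den : ℤ) * q - α.num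
    have hαd : α = q - (d : ℚ) / α.den := by
      nth_rewrite 1 [← α.num_div_den]
      push_cast [d]
      field_simp
      ring
    rw [hαd, sub_div_pos_and_lt_one_iff hden] at hα01
    have hbounds := (floor_div_add_one_le_and_le_ceil_div_sub_one_iff (m := (α.den : ℤ)) hq1).mpr
      (by simpa only [Int.cast_natCast] using hα01)
    refine ⟨d, ?_, ?_, hαd, hbounds⟩
    · have : (0 : ℚ) ≤ α.den * ((q : ℚ) - 1) := mul_nonneg hden.le (by linarith)
      exact_mod_cast this.trans_lt hα01.1
    · simpa only [Nat.cast_pow] using hα.den_mul_sub_num_dvd_sub hq (dvd_pow_self q (by omega))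
  · rintro ⟨d, -, -, hαd, hbounds⟩
    rw [hαd, sub_div_pos_and_lt_one_iff hden]
    simpa only [Int.cast_natCast] using
      (floor_div_add_one_le_and_le_ceil_div_sub_one_iff hq1).mp hbounds
end
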